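/- Let K ≥ 2 and let η : {1,…,K} × {1,…,K} → (0,∞) be given, writing η_{k→ℓ} := η(k,ℓ). There exists θ ∈ Δ satisfying θ_ℓ ≤ η_{k→ℓ} · θ_k for all k, ℓ ∈ {1,…,K} (necessarily with all θ_k > 0) if and only if for every L ≥ 1 and all indices j_1,…,j_L ∈ {1,…,K}, the cyclic product η_{j_1→j_2} · η_{j_2→j_3} ⋯ η_{j_{L−1}→j_L} · η_{j_L→j_1} ≥ 1. -/

import Mathlib

/-!
If `θ` is a positive solution, multiplying `θ (j (i+1)) ≤ η (j i) (j (i+1)) * θ (j i)` around a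
cycle and cancelling `∏ θ (j i)` gives the cycle condition. Conversely, under the cycle condition
the weight of any path from a base point `a` to `ℓ` is at least `(η ℓ a)⁻¹`, since closing it up
with the edge `ℓ → a` gives a cycle. So the infimum `d ℓ` of the weights of paths from `a` to `ℓ`
is positive, extending paths by one edge shows `d ℓ ≤ η k ℓ * d k`, and normalising `d` gives `θ`.
-/

noncomputable section

open Finset

section Cycles

variable {ι : Type*} (η : ι → ι → ℝ)

def pathWeight (m : ℕ) (j : Fin (m + 1) → ι) : ℝ :=
  ∏ i : Fin m, η (j i.castSucc) (j i.succ)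

theorem pathWeight_snoc (m : ℕ) (j : Fin (m + 1) → ι) (ℓ : ι) :
    pathWeight η (m + 1) (Fin.snoc j ℓ) = pathWeight η m j * η (j (Fin.last m)) ℓ := by
  simp only [pathWeight, Fin.prod_univ_castSucc, Fin.succ_castSucc, Fin.snoc_castSucc,
    Fin.succ_last, Fin.snoc_last]

theorem prod_cycle_eq_pathWeight_mul (m : ℕ) (j : Fin (m + 1) → ι) :
    ∏ i : Fin (m + 1), η (j i) (j (i + 1)) = pathWeight η m j * η (j (Fin.last m)) (j 0) := by
  simp only [Fin.prod_univ_castSucc, Fin.last_add_one, pathWeight, Fin.coeSucc_eq_succ]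

def pathWeights (a ℓ : ι) : Set ℝ :=
  {x | ∃ m, ∃ j : Fin (m + 1) → ι, j 0 = a ∧ j (Fin.last m) = ℓ ∧ pathWeight η m j = x}

theorem pathWeights_nonempty (a ℓ : ι) : (pathWeights η a ℓ).Nonempty :=
  ⟨η a ℓ, 1, ![a, ℓ], rfl, rfl, by simp [pathWeight]⟩

theorem mul_mem_pathWeights {a k : ι} {x : ℝ} (hx : x ∈ pathWeights η a k) (ℓ : ι) :
    x * η k ℓ ∈ pathWeights η a ℓ := by
  obtain ⟨m, j, hj0, hjk, rfl⟩ := hx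
  refine ⟨m + 1, Fin.snoc j ℓ, ?_, Fin.snoc_last _ _, ?_⟩
  · simpa using hj0
  · rw [pathWeight_snoc, hjk]

variable {η}

theorem inv_le_of_mem_pathWeights
    (hcyc : ∀ (L : ℕ) (j : Fin (L + 1) → ι), 1 ≤ ∏ i : Fin (L + 1), η (j i) (j (i + 1)))
    {a ℓ : ι} (hη : 0 < η ℓ a) {x : ℝ} (hx : x ∈ pathWeights η a ℓ) :
    (η ℓ a)⁻¹ ≤ x := by
  obtain ⟨m, j, hj0, hjℓ, rfl⟩ := hx
  have h := hcyc m j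
  rw [prod_cycle_eq_pathWeight_mul, hj0, hjℓ] at h
  rwa [inv_le_iff_one_le_mul₀ hη]

def pathPotential (η : ι → ι → ℝ) (a ℓ : ι) : ℝ :=
  sInf (pathWeights η a ℓ)

theorem pathPotential_pos
    (hcyc : ∀ (L : ℕ) (j : Fin (L + 1) → ι), 1 ≤ ∏ i : Fin (L + 1), η (j i) (j (i + 1)))
    (hpos : ∀ k ℓ, 0 < η k ℓ) (a ℓ : ι) : 0 < pathPotential η a ℓ :=
  (inv_pos.mpr (hpos ℓ a)).trans_le <|
    le_csInf (pathWeights_nonempty η a ℓ) fun _ ↦ inv_le_of_mem_pathWeights hcyc (hpos ℓ a)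

theorem pathPotential_le_mul
    (hcyc : ∀ (L : ℕ) (j : Fin (L + 1) → ι), 1 ≤ ∏ i : Fin (L + 1), η (j i) (j (i + 1)))
    (hpos : ∀ k ℓ, 0 < η k ℓ) (a k ℓ : ι) :
    pathPotential η a ℓ ≤ η k ℓ * pathPotential η a k := by
  have hbdd : BddBelow (pathWeights η a ℓ) :=
    ⟨_, fun _ ↦ inv_le_of_mem_pathWeights hcyc (hpos ℓ a)⟩
  rw [mul_comm, ← div_le_iff₀ (hpos k ℓ)]
  refine le_csInf (pathWeights_nonempty η a k) fun x hx ↦ ?_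
  rw [div_le_iff₀ (hpos k ℓ)]
  exact csInf_le hbdd (mul_mem_pathWeights η hx ℓ)

theorem pos_of_le_mul_of_pos {θ : ι → ℝ} (hθ : ∀ k ℓ, θ ℓ ≤ η k ℓ * θ k) {m : ι}
    (hm : 0 < θ m) {k : ι} (hk : 0 ≤ θ k) : 0 < θ k :=
  hk.lt_of_ne fun h ↦ by simpa [← h] using hm.trans_le (hθ k m)

theorem one_le_prod_cycle_of_le_mul {θ : ι → ℝ} (hθpos : ∀ k, 0 < θ k)
    (hθ : ∀ k ℓ, θ ℓ ≤ η k ℓ * θ k) (L : ℕ) (j : Fin (L + 1) → ι) :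
    1 ≤ ∏ i : Fin (L + 1), η (j i) (j (i + 1)) := by
  have hprod : 0 < ∏ i : Fin (L + 1), θ (j i) := prod_pos fun i _ ↦ hθpos _
  refine (le_mul_iff_one_le_left hprod).mp ?_
  calc ∏ i : Fin (L + 1), θ (j i)
      = ∏ i : Fin (L + 1), θ (j (i + 1)) :=
        (Equiv.prod_comp (Equiv.addRight 1) fun i ↦ θ (j i)).symm
    _ ≤ ∏ i : Fin (L + 1), η (j i) (j (i + 1)) * θ (j i) :=
        prod_le_prod (fun i _ ↦ (hθpos _).le) fun i _ ↦ hθ _ _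
    _ = (∏ i : Fin (L + 1), η (j i) (j (i + 1))) * ∏ i : Fin (L + 1), θ (j i) :=
        prod_mul_distrib

end Cycles

theorem div_sum_mem_stdSimplex {ι : Type*} [Fintype ι] [Nonempty ι] {d : ι → ℝ}
    (hd : ∀ k, 0 < d k) : (fun k ↦ d k / ∑ i, d i) ∈ stdSimplex ℝ ι := by
  have hsum : 0 < ∑ i, d i := sum_pos (fun i _ ↦ hd i) univ_nonempty
  exact ⟨fun k ↦ div_nonneg (hd k).le hsum.le, by rw [← sum_div, div_self hsum.ne']⟩

theorem stmt6 (K : ℕ) (hK : 2 ≤ K) (η : Fin K → Fin K → ℝ)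
    (hpos : ∀ k ℓ, 0 < η k ℓ) :
    (∃ θ ∈ stdSimplex ℝ (Fin K), ∀ k ℓ, θ ℓ ≤ η k ℓ * θ k) ↔
      (∀ (L : ℕ) (j : Fin (L + 1) → Fin K),
        1 ≤ ∏ i : Fin (L + 1), η (j i) (j (i + 1))) := by
  have : NeZero K := ⟨by omega⟩
  constructor
  · rintro ⟨θ, hθΔ, hθ⟩
    obtain ⟨m, hm⟩ : ∃ m, 0 < θ m := by
      by_contra! h
      linarith [hθΔ.2, sum_nonpos fun m (_ : m ∈ univ) ↦ h m]
    exact one_le_prod_cycle_of_le_mul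
      (fun k ↦ pos_of_le_mul_of_pos hθ hm (hθΔ.1 k)) hθ
  · intro hcyc
    refine ⟨_, div_sum_mem_stdSimplex (pathPotential_pos hcyc hpos 0), fun k ℓ ↦ ?_⟩
    rw [← mul_div_assoc]
    exact div_le_div_of_nonneg_right (pathPotential_le_mul hcyc hpos 0 k ℓ)
      (sum_nonneg fun i _ ↦ (pathPotential_pos hcyc hpos 0 i).le)
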